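/- Let F_n ⊂ F_{n+1} be σ-algebras, let G_{n+1}, E_{n+1} be F_{n+1}-measurable random vectors in ℝ^d with ‖E_{n+1}‖ ≤ M, and let U_{n+2} be independent of F_{n+1} with a compactly supported law ν absolutely continuous with respect to Lebesgue measure. Then there exist γ, μ > 0 (depending only on ν, M, d) such that for every unit vector w and every λ ∈ (0,1), almost surely P( inf_{v ∈ S(w,γ)} ( |v^T G_{n+1}|^2 + |v^T (U_{n+2} + λ G_{n+1} + E_{n+1})|^2 ) > μ | F_n ) ≥ 1/2. -/

import Mathlib

open MeasureTheory ProbabilityTheory Filter Topology Set Metric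
open scoped RealInnerProductSpace ENNReal

/-!
Absolute continuity makes every hyperplane `ν`-null, so thin slabs `|⟪w, x⟫ - t| ≤ δ` carry
little mass; compactness of the unit sphere and of the support of `ν` makes `δ` uniform in
`(w, t)`, with `ν (slab) < 1/2`. As `U` is independent of `F'` and `E` is `F'`-measurable, with
conditional probability at least `1/2` the vector `U + E` lies outside the slab of width `δ`
around the hyperplane `⟪w, ·⟫ = 0`. There `|⟪v, U + E⟫| ≥ δ/2` for every `v` close to `w`, and
then either `|⟪v, G⟫| ≥ δ/4`, or `⟪v, G⟫` is too small for `l ⟪v, G⟫` to cancel `⟪v, U + E⟫`.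
-/

theorem sq_le_sq_add_sq_add_mul {a b l ε : ℝ} (hε : 0 ≤ ε) (hl : |l| ≤ 1) (hb : 2 * ε ≤ |b|) :
    ε ^ 2 ≤ a ^ 2 + (b + l * a) ^ 2 := by
  rcases le_or_gt ε |a| with ha | ha
  · nlinarith [sq_abs a, sq_nonneg (b + l * a)]
  · have hla : |l * a| ≤ |a| := by rw [abs_mul]; exact mul_le_of_le_one_left (abs_nonneg a) hl
    have : |b| ≤ |b + l * a| + |l * a| := by simpa using abs_sub (b + l * a) (l * a)
    nlinarith [sq_abs (b + l * a), sq_nonneg a]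

section InnerProductSpace

variable {E : Type*} [NormedAddCommGroup E] [InnerProductSpace ℝ E]

theorem abs_inner_sub_le_abs_inner (v w x : E) : |⟪w, x⟫| - ‖v - w‖ * ‖x‖ ≤ |⟪v, x⟫| := by
  have h := abs_real_inner_le_norm (v - w) x
  rw [inner_sub_left] at h
  linarith [abs_sub_abs_le_abs_sub ⟪w, x⟫ ⟪v, x⟫, abs_sub_comm ⟪v, x⟫ ⟪w, x⟫]

theorem sq_le_iInf_inner_sq_add_inner_sq {w u e : E} (hw : ‖w‖ = 1) (g : E) {l ε K : ℝ}
    (hε : 0 ≤ ε) (hK : 0 < K) (hl : |l| ≤ 1) (hue : ‖u + e‖ ≤ K) (hwue : 4 * ε ≤ |⟪w, u + e⟫|) :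
    ε ^ 2 ≤ ⨅ v : {v : E // ‖v‖ = 1 ∧ ‖v - w‖ ≤ 2 * ε / K},
      ⟪v.1, g⟫ ^ 2 + ⟪v.1, u + l • g + e⟫ ^ 2 := by
  have : Nonempty {v : E // ‖v‖ = 1 ∧ ‖v - w‖ ≤ 2 * ε / K} := ⟨⟨w, hw, by simp; positivity⟩⟩
  refine le_ciInf fun ⟨v, _, hvw⟩ => ?_
  have hvw' : ‖v - w‖ * ‖u + e‖ ≤ 2 * ε :=
    calc ‖v - w‖ * ‖u + e‖ ≤ 2 * ε / K * K := by gcongr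
      _ = 2 * ε := by field_simp
  rw [add_right_comm, inner_add_right, real_inner_smul_right]
  exact sq_le_sq_add_sq_add_mul hε hl (by linarith [abs_inner_sub_le_abs_inner v w (u + e)])

def slab (w : E) (t δ : ℝ) : Set E := {x | |⟪w, x⟫ - t| ≤ δ}

theorem isClosed_slab (w : E) (t δ : ℝ) : IsClosed (slab w t δ) :=
  isClosed_le (by fun_prop) continuous_const

theorem slab_inter_closedBall_subset {w w' : E} {t t' δ R : ℝ} :
    slab w' t' δ ∩ closedBall 0 R ⊆ slab w t (δ + ‖w' - w‖ * R + |t' - t|) := by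
  rintro x ⟨hx, hxR⟩
  rw [mem_closedBall_zero_iff] at hxR
  have hinner : |⟪w' - w, x⟫| ≤ ‖w' - w‖ * R :=
    (abs_real_inner_le_norm _ _).trans (by gcongr)
  have hdecomp : ⟪w, x⟫ - t = (⟪w', x⟫ - t') - ⟪w' - w, x⟫ + (t' - t) := by
    rw [inner_sub_left]; ring
  simp only [slab, mem_ofPred_eq] at hx ⊢
  rw [hdecomp]
  exact (abs_add_le _ _).trans (add_le_add ((abs_sub _ _).trans (by gcongr)) le_rfl)

theorem slab_inter_closedBall_eq_empty {w : E} (hw : ‖w‖ = 1) {t δ R : ℝ} (ht : R + δ < |t|) :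
    slab w t δ ∩ closedBall 0 R = ∅ := by
  refine eq_empty_of_forall_notMem fun x ⟨hx, hxR⟩ => ?_
  rw [mem_closedBall_zero_iff] at hxR
  have : |⟪w, x⟫| ≤ R := (abs_real_inner_le_norm _ _).trans (by rw [hw, one_mul]; exact hxR)
  have := abs_sub_abs_le_abs_sub t ⟪w, x⟫
  simp only [slab, mem_ofPred_eq, abs_sub_comm] at hx
  linarith

theorem biInter_slab (w : E) (t : ℝ) : ⋂ δ > 0, slab w t δ = {x | ⟪w, x⟫ = t} := by
  ext x
  simp only [slab, mem_iInter, mem_ofPred_eq]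
  refine ⟨fun h => ?_, fun h δ hδ => by simp [h, hδ.le]⟩
  exact sub_eq_zero.mp <| abs_nonpos_iff.mp <|
    le_of_forall_pos_le_add fun δ hδ => by simpa using h δ hδ

theorem measurableSet_lt_iInf_inner_sq_add_inner_sq [MeasurableSpace E]
    [OpensMeasurableSpace (E × E)] {Ω ι : Type*} {_ : MeasurableSpace Ω} {X Y : Ω → E}
    (hX : Measurable X) (hY : Measurable Y) (v : ι → E) (c : ℝ) :
    MeasurableSet {ω | c < ⨅ i, ⟪v i, X ω⟫ ^ 2 + ⟪v i, Y ω⟫ ^ 2} := by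
  have hinf : UpperSemicontinuous fun p : E × E => ⨅ i, ⟪v i, p.1⟫ ^ 2 + ⟪v i, p.2⟫ ^ 2 :=
    upperSemicontinuous_ciInf (fun _ => ⟨0, by rintro _ ⟨i, rfl⟩; positivity⟩)
      fun _ => (by fun_prop : Continuous _).upperSemicontinuous
  exact hinf.measurable.comp (hX.prodMk hY) measurableSet_Ioi

variable [MeasurableSpace E] [BorelSpace E]

theorem MeasureTheory.Measure.addHaar_setOf_inner_eq [FiniteDimensional ℝ E] (μ : Measure E)
    [μ.IsAddHaarMeasure] {w : E} (hw : w ≠ 0) (t : ℝ) : μ {x | ⟪w, x⟫ = t} = 0 := by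
  rcases eq_empty_or_nonempty {x : E | ⟪w, x⟫ = t} with h | ⟨x₀, hx₀⟩
  · simp [h]
  have hlevel : {x | ⟪w, x⟫ = t} = (fun x => -x₀ + x) ⁻¹' ((ℝ ∙ w)ᗮ : Submodule ℝ E) := by
    ext x
    simp only [mem_ofPred_eq] at hx₀
    simp [Submodule.mem_orthogonal_singleton_iff_inner_right, inner_add_right, hx₀,
      neg_add_eq_zero, eq_comm]
  rw [hlevel, measure_preimage_add, Measure.addHaar_submodule μ _ ?_]
  simpa [Submodule.orthogonal_eq_top_iff] using hw

theorem exists_pos_measure_slab_lt (ν : Measure E) [IsFiniteMeasure ν] {w : E} {t : ℝ}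
    (hnull : ν {x | ⟪w, x⟫ = t} = 0) {η : ℝ≥0∞} (hη : 0 < η) :
    ∃ δ > 0, ν (slab w t δ) < η := by
  have hlim : Tendsto (fun δ => ν (slab w t δ)) (𝓝[>] 0) (𝓝 0) := by
    have := tendsto_measure_biInter_gt (μ := ν) (s := slab w t) (a := (0:ℝ))
      (fun δ _ => (isClosed_slab w t δ).measurableSet.nullMeasurableSet)
      (fun i j _ hij x hx => le_trans hx hij) ⟨1, one_pos, measure_ne_top _ _⟩
    rwa [biInter_slab, hnull] at this
  exact ((hlim.eventually (gt_mem_nhds hη)).and self_mem_nhdsWithin).exists.imp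
    fun δ h => ⟨h.2, h.1⟩

theorem exists_pos_forall_measure_slab_lt [FiniteDimensional ℝ E] (ν : Measure E)
    [IsFiniteMeasure ν] (hnull : ∀ w : E, ‖w‖ = 1 → ∀ t, ν {x | ⟪w, x⟫ = t} = 0) {R : ℝ}
    (hR : ∀ᵐ x ∂ν, ‖x‖ ≤ R) {η : ℝ≥0∞} (hη : 0 < η) :
    ∃ δ > 0, ∀ w : E, ‖w‖ = 1 → ∀ t, ν (slab w t δ) < η := by
  have hν : ∀ {s : Set E}, ν s ≤ ν (s ∩ closedBall 0 R) := fun {s} =>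
    measure_mono_ae (hR.mono fun x hx hxs => ⟨hxs, mem_closedBall_zero_iff.mpr hx⟩)
  -- slabs close to a fixed one are, within the support, contained in a slightly wider one
  have hlocal : ∀ p ∈ sphere (0 : E) 1 ×ˢ Icc (-(R + 1)) (R + 1),
      ∀ᶠ z : ℝ × E × ℝ in 𝓝 (0, p), ν (slab z.2.1 z.2.2 z.1) < η := by
    rintro ⟨w, t⟩ ⟨hw, -⟩
    obtain ⟨δ, hδpos, hδ⟩ := exists_pos_measure_slab_lt ν (hnull w (by simpa using hw) t) hη
    have hcont : Tendsto (fun z : ℝ × E × ℝ => z.1 + ‖z.2.1 - w‖ * R + |z.2.2 - t|)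
        (𝓝 (0, w, t)) (𝓝 0) := by
      have : Continuous fun z : ℝ × E × ℝ => z.1 + ‖z.2.1 - w‖ * R + |z.2.2 - t| := by
        fun_prop
      simpa using this.tendsto (0, w, t)
    filter_upwards [hcont.eventually (gt_mem_nhds hδpos)] with z hz
    exact hν.trans_lt ((measure_mono (slab_inter_closedBall_subset.trans
        fun x hx => le_trans hx hz.le)).trans_lt hδ)
  have hK : IsCompact (sphere (0 : E) 1 ×ˢ Icc (-(R + 1)) (R + 1)) :=
    (isCompact_sphere 0 1).prod isCompact_Icc
  have hsmall := (hK.eventually_forall_of_forall_eventually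
    (P := fun δ p => ν (slab p.1 p.2 δ) < η) hlocal).and (gt_mem_nhds one_pos)
  obtain ⟨δ, ⟨hδK, hδ1⟩, hδpos⟩ :=
    ((hsmall.filter_mono nhdsWithin_le_nhds).and (self_mem_nhdsWithin (s := Ioi 0))).exists
  refine ⟨δ, hδpos, fun w hw t => ?_⟩
  by_cases ht : |t| ≤ R + 1
  · exact hδK (w, t) ⟨by simpa using hw, abs_le.mp ht⟩
  · refine hν.trans_lt ?_
    rw [slab_inter_closedBall_eq_empty hw (by linarith), measure_empty]
    exact hη

theorem half_le_measure_lt_abs_inner_add (ν : Measure E) [IsProbabilityMeasure ν] {w : E} {δ : ℝ}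
    (h : ∀ t, ν (slab w t δ) < 1 / 2) (e : E) : 1 / 2 ≤ ν {u | δ < |⟪w, u + e⟫|} := by
  have hcompl : {u | δ < |⟪w, u + e⟫|} = (slab w (-⟪w, e⟫) δ)ᶜ := by
    ext u; simp [slab, inner_add_right]
  rw [hcompl, prob_compl_eq_one_sub (isClosed_slab _ _ _).measurableSet]
  exact ENNReal.le_sub_of_add_le_left (measure_ne_top _ _)
    ((add_le_add_left (h _).le _).trans (ENNReal.add_halves 1).le)

end InnerProductSpace

theorem ae_toReal_le_condExp_indicator {Ω : Type*} {F m : MeasurableSpace Ω} {μ : Measure Ω}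
    [IsFiniteMeasure μ] (hF : F ≤ m) {T : Set Ω} (hT : MeasurableSet[m] T) {c : ℝ≥0∞}
    (h : ∀ s, MeasurableSet[F] s → c * μ s ≤ μ (T ∩ s)) :
    ∀ᵐ ω ∂μ, c.toReal ≤ (μ[T.indicator 1 | F]) ω := by
  have : IsFiniteMeasure (μ.trim hF) := isFiniteMeasure_trim hF
  refine ae_of_ae_trim hF <| ae_le_of_forall_setIntegral_le (integrable_const _)
    (integrable_condExp.trim hF stronglyMeasurable_condExp) fun s hs _ => ?_
  rw [← setIntegral_trim hF stronglyMeasurable_const hs,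
    ← setIntegral_trim hF stronglyMeasurable_condExp hs,
    setIntegral_condExp hF ((integrable_const 1).indicator hT) hs, integral_indicator_one hT,
    setIntegral_const, smul_eq_mul, measureReal_restrict_apply hT, mul_comm]
  exact ENNReal.toReal_mul ▸ ENNReal.toReal_mono (measure_ne_top _ _) (h s hs)

theorem mul_measure_le_measure_inter_of_indep {Ω α β : Type*} {F m : MeasurableSpace Ω}
    {μ : Measure Ω} [IsFiniteMeasure μ] [MeasurableSpace α] [MeasurableSpace β]
    (hF : F ≤ m) {X : Ω → β} {U : Ω → α} (hX : Measurable[F] X) (hU : Measurable[m] U)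
    (hindep : Indep (MeasurableSpace.comap U inferInstance) F μ) {A : Set (β × α)}
    (hA : MeasurableSet A) {p : ℝ≥0∞} (hp : ∀ x, p ≤ μ.map U (Prod.mk x ⁻¹' A))
    {s : Set Ω} (hs : MeasurableSet[F] s) :
    p * μ s ≤ μ ({ω | (X ω, U ω) ∈ A} ∩ s) := by
  -- pairing `X` with the indicator of `s` makes `s` visible to the product formula
  set W : Ω → β × ℝ := fun ω => (X ω, s.indicator 1 ω)
  have hWF : Measurable[F] W := hX.prodMk (measurable_const.indicator hs)
  have hWm : Measurable[m] W := hWF.mono hF le_rfl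
  have hWU : μ.map (fun ω => (W ω, U ω)) = (μ.map W).prod (μ.map U) :=
    (indepFun_iff_map_prod_eq_prod_map_map hWm.aemeasurable hU.aemeasurable).mp
      (indep_of_indep_of_le_left hindep.symm hWF.comap_le)
  set A' : Set ((β × ℝ) × α) := {q | q.1.2 = 1 ∧ (q.1.1, q.2) ∈ A}
  have hone : MeasurableSet {q : β × ℝ | q.2 = 1} := measurable_snd (measurableSet_singleton 1)
  have hA' : MeasurableSet A' :=
    (measurable_fst.snd (measurableSet_singleton 1)).inter
      (hA.preimage (measurable_fst.fst.prodMk measurable_snd))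
  have hWs : W ⁻¹' {q | q.2 = 1} = s := by
    ext ω; by_cases hω : ω ∈ s <;> simp [W, hω]
  have hsection :
      {q : β × ℝ | q.2 = 1}.indicator (fun _ => p) ≤ fun q => μ.map U (Prod.mk q ⁻¹' A') := by
    intro q
    by_cases hq : q.2 = 1
    · have hA'q : Prod.mk q ⁻¹' A' = Prod.mk q.1 ⁻¹' A := by ext; simp [A', hq]
      simpa [hq, hA'q] using hp q.1
    · simp [hq]
  calc p * μ s = ∫⁻ q, {q : β × ℝ | q.2 = 1}.indicator (fun _ => p) q ∂μ.map W := by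
        rw [lintegral_indicator_const hone, Measure.map_apply hWm hone, hWs]
    _ ≤ (μ.map W).prod (μ.map U) A' := by
        rw [Measure.prod_apply hA']; exact lintegral_mono hsection
    _ = μ ({ω | (X ω, U ω) ∈ A} ∩ s) := by
        rw [← hWU, Measure.map_apply (hWm.prodMk hU) hA']
        congr 1; ext ω; by_cases hω : ω ∈ s <;> simp [W, A', hω, and_comm]

/-- Lemma 6 of the paper: with `G`, `E` measurable w.r.t. `F'` (`F ⊆ F'`),
`‖E‖ ≤ M`, and `U` independent of `F'` with compactly supported absolutely
continuous law `ν`, there are `γ, c > 0` such that for every unit vector `w`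
and every `l ∈ (0,1)`, almost surely
`P( inf_{v ∈ S(w,γ)} (|vᵀG|² + |vᵀ(U + l G + E)|²) > c | F ) ≥ 1/2`. -/
theorem eigen_lower_bound_conditional {d : ℕ}
    {Ω : Type*} {m : MeasurableSpace Ω} {μ : Measure Ω} [IsProbabilityMeasure μ]
    {F F' : MeasurableSpace Ω} (hFF' : F ≤ F') (hF'm : F' ≤ m)
    (G E U : Ω → EuclideanSpace ℝ (Fin d)) (M : ℝ) (hM : 0 < M)
    (hG : Measurable[F'] G) (hE : Measurable[F'] E)
    (hEbdd : ∀ ω, ‖E ω‖ ≤ M)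
    (hU : Measurable[m] U)
    (hUindep : Indep (_mΩ := m) (MeasurableSpace.comap U inferInstance) F' μ)
    (ν : Measure (EuclideanSpace ℝ (Fin d))) [IsProbabilityMeasure ν]
    (hUlaw : @Measure.map Ω (EuclideanSpace ℝ (Fin d)) m (by infer_instance) U μ = ν)
    (hac : ν ≪ volume)
    (hcompact : ∃ K : Set (EuclideanSpace ℝ (Fin d)), IsCompact K ∧ ν Kᶜ = 0) :
    ∃ γ > (0:ℝ), ∃ c > (0:ℝ),
      ∀ w : EuclideanSpace ℝ (Fin d), ‖w‖ = 1 →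
      ∀ l : ℝ, 0 < l → l < 1 →
        ∀ᵐ ω ∂μ,
          (1/2 : ℝ) ≤
            (μ[Set.indicator
                {ω' | c < ⨅ v : {v : EuclideanSpace ℝ (Fin d) // ‖v‖ = 1 ∧ ‖v - w‖ ≤ γ},
                  ((inner ℝ v.1 (G ω') : ℝ) ^ 2
                    + (inner ℝ v.1 (U ω' + l • G ω' + E ω') : ℝ) ^ 2)}
                (fun _ => (1:ℝ)) | F]) ω := by
  obtain ⟨K, hK, hνK⟩ := hcompact
  obtain ⟨R, hR, hKR⟩ := hK.isBounded.subset_closedBall_lt 0 0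
  have hνR : ∀ᵐ x ∂ν, ‖x‖ ≤ R :=
    measure_mono_null (fun x hx hxK => hx (mem_closedBall_zero_iff.mp (hKR hxK))) hνK
  obtain ⟨δ, hδ, hslab⟩ := exists_pos_forall_measure_slab_lt ν (fun w hw t =>
    hac (Measure.addHaar_setOf_inner_eq volume (norm_ne_zero_iff.mp (by simp [hw])) t))
    hνR (η := 1 / 2) (by norm_num)
  refine ⟨2 * (δ / 4) / (R + M), by positivity, (δ / 4) ^ 2 / 2, by positivity,
    fun w hw l hl0 hl1 => ?_⟩
  set T : Set Ω := {ω | (δ / 4) ^ 2 / 2 < ⨅ v : {v : EuclideanSpace ℝ (Fin d) //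
    ‖v‖ = 1 ∧ ‖v - w‖ ≤ 2 * (δ / 4) / (R + M)}, ⟪v.1, G ω⟫ ^ 2 + ⟪v.1, U ω + l • G ω + E ω⟫ ^ 2}
  have hGm := hG.mono hF'm le_rfl
  have hT : MeasurableSet[m] T := measurableSet_lt_iInf_inner_sq_add_inner_sq hGm
    ((hU.add (hGm.const_smul l)).add (hE.mono hF'm le_rfl)) Subtype.val _
  have hUR : ∀ᵐ ω ∂μ, ‖U ω‖ ≤ R := ae_of_ae_map hU.aemeasurable (hUlaw ▸ hνR)
  refine (ae_toReal_le_condExp_indicator (c := 1 / 2) (hFF'.trans hF'm) hT fun s hs => ?_).mono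
    fun ω hω => by norm_num at hω; exact hω
  calc 1 / 2 * μ s ≤ μ ({ω | (E ω, U ω) ∈ {q | δ < |⟪w, q.2 + q.1⟫|}} ∩ s) :=
        mul_measure_le_measure_inter_of_indep hF'm hE hU hUindep
          (measurableSet_lt measurable_const (by fun_prop))
          (fun e => hUlaw ▸ half_le_measure_lt_abs_inner_add ν (hslab w hw) e) (hFF' s hs)
    _ ≤ μ (T ∩ s) := measure_mono_ae <| hUR.mono fun ω hUω hω => ⟨?_, hω.2⟩
  refine (half_lt_self (by positivity)).trans_le (sq_le_iInf_inner_sq_add_inner_sq hw _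
    (by positivity) (by positivity) (abs_le.mpr ⟨by linarith, hl1.le⟩)
    ((norm_add_le _ _).trans (add_le_add hUω (hEbdd ω))) ?_)
  linarith [show δ < |⟪w, U ω + E ω⟫| from hω.1]
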